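/- For all natural numbers h, k and every real λ ≥ 1 there exists a constant c such that the following holds: if G is a graph of highway dimension at most h, r > 0, C is an (r,k) vertex cover of G, and 0 < r' ≤ λ·r, then for every v ∈ V the total complexity of B(v,r') ∩ C in the shortcut graph G(C,r') — the number of vertices of C in B(v,r') plus the sum of their degrees in G(C,r') — is at most c. -/

import Mathlib

open SimpleGraph

/-- The length (total weight) of a walk under an edge-weight function `w`. -/
noncomputable def wlen {V : Type*} {G : SimpleGraph V} (w : Sym2 V → ℝ) {u v : V}
    (p : G.Walk u v) : ℝ :=
  (p.edges.map w).sum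

/-- `p` is a subwalk (subpath) of `q`. -/
def IsSubwalk {V : Type*} {G : SimpleGraph V} {u v a b : V}
    (p : G.Walk u v) (q : G.Walk a b) : Prop :=
  ∃ (q1 : G.Walk a u) (q2 : G.Walk v b), q = (q1.append p).append q2

/-- Shortest-path distance as the infimum of walk lengths. -/
noncomputable def wdist {V : Type*} (G : SimpleGraph V) (w : Sym2 V → ℝ) (u v : V) : ℝ :=
  sInf {x : ℝ | ∃ p : G.Walk u v, x = wlen w p}

/-- A finite connected positively-weighted graph (all weights at least 1) with
unique shortest paths, in which every edge is the unique shortest path between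
its endpoints.  `sp u v` is the unique shortest path from `u` to `v`. -/
structure Setting (V : Type) [Fintype V] where
  G : SimpleGraph V
  w : Sym2 V → ℝ
  connected : G.Connected
  one_le_w : ∀ e ∈ G.edgeSet, 1 ≤ w e
  sp : ∀ u v : V, G.Walk u v
  sp_isPath : ∀ u v : V, (sp u v).IsPath
  sp_shortest : ∀ (u v : V) (q : G.Walk u v), wlen w (sp u v) ≤ wlen w q
  sp_unique : ∀ (u v : V) (q : G.Walk u v), q.IsPath →
    wlen w q = wlen w (sp u v) → q = sp u v
  edge_sp : ∀ (u v : V) (h : G.Adj u v),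
    sp u v = SimpleGraph.Walk.cons h SimpleGraph.Walk.nil

namespace Setting

variable {V : Type} [Fintype V]

/-- Shortest-path distance `d(u,v)`. -/
noncomputable def d (S : Setting V) (u v : V) : ℝ := wlen S.w (S.sp u v)

/-- The ball `B(v,r)`. -/
def ball (S : Setting V) (v : V) (r : ℝ) : Set V := {u : V | S.d v u ≤ r}

/-- `maxedge(p(u,v)) ≤ r`: every edge of the shortest path has weight at most `r`. -/
def maxedgeLE (S : Setting V) (u v : V) (r : ℝ) : Prop :=
  ∀ e ∈ (S.sp u v).edges, S.w e ≤ r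

/-- An `(r,k)` vertex cover. -/
def IsVertexCover (S : Setting V) (r : ℝ) (k : ℕ) (C : Set V) : Prop :=
  (∀ v1 v2 : V, r < S.d v1 v2 → S.maxedgeLE v1 v2 r →
      ∃ c ∈ C, c ∈ (S.sp v1 v2).support) ∧
  (∀ v : V, (S.ball v (2 * r) ∩ C).ncard ≤ k)

/-- Discrete highway dimension at most `h`. -/
def DiscreteHDLE (S : Setting V) (h : ℕ) : Prop :=
  ∀ (v : V) (r : ℝ), 0 < r →
    ∃ C : Set V, C.ncard ≤ h ∧
      ∀ v1 v2 : V, (∀ x ∈ (S.sp v1 v2).support, x ∈ S.ball v (4 * r)) →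
        r < S.d v1 v2 → ∃ c ∈ C, c ∈ (S.sp v1 v2).support

/-- The (unique) shortest path from `v1` to `v2` is `r`-significant:
it has an `r`-witness. -/
def RSignificant (S : Setting V) (r : ℝ) (v1 v2 : V) : Prop :=
  ∃ a b : V, (a = v1 ∨ S.G.Adj a v1) ∧ (b = v2 ∨ S.G.Adj b v2) ∧
    r ≤ S.d a b ∧ IsSubwalk (S.sp v1 v2) (S.sp a b)

/-- The shortest path from `v1` to `v2` is `(r,2r)`-close to `v`,
i.e. it belongs to `S(v,r)`. -/
def InSvr (S : Setting V) (v : V) (r : ℝ) (v1 v2 : V) : Prop :=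
  ∃ a b : V, (a = v1 ∨ S.G.Adj a v1) ∧ (b = v2 ∨ S.G.Adj b v2) ∧
    r ≤ S.d a b ∧ IsSubwalk (S.sp v1 v2) (S.sp a b) ∧
    ∃ x ∈ (S.sp a b).support, S.d v x ≤ 2 * r

/-- Highway dimension at most `h`. -/
def HighwayDimLE (S : Setting V) (h : ℕ) : Prop :=
  ∀ (r : ℝ), 0 < r → ∀ v : V,
    ∃ C : Set V, C.ncard ≤ h ∧
      ∀ v1 v2 : V, S.InSvr v r v1 v2 → ∃ c ∈ C, c ∈ (S.sp v1 v2).support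

/-- An `(r,h')`-SPHS. -/
def IsSPHS (S : Setting V) (r : ℝ) (h' : ℕ) (C : Set V) : Prop :=
  (∀ v1 v2 : V, S.RSignificant r v1 v2 → ∃ c ∈ C, c ∈ (S.sp v1 v2).support) ∧
  (∀ v : V, (C ∩ S.ball v (2 * r)).ncard ≤ h')

/-- Adjacency in the `r`-shortcut graph `G(C,r)`. -/
def shortcutAdj (S : Setting V) (C : Set V) (r : ℝ) (v1 v2 : V) : Prop :=
  v1 ≠ v2 ∧ v1 ∈ C ∧ v2 ∈ C ∧ S.d v1 v2 ≤ r ∧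
    ∀ c ∈ C, c ∈ (S.sp v1 v2).support → c = v1 ∨ c = v2

/-- An `(r,η)` path cover, a set of shortest paths represented by their
endpoint pairs. -/
def IsPathCover (S : Setting V) (r : ℝ) (η : ℕ) (P : Set (V × V)) : Prop :=
  (∀ q ∈ P, r / 4 ≤ S.d q.1 q.2 ∧ S.d q.1 q.2 ≤ r) ∧
  (∀ v1 v2 : V, r / 2 ≤ S.d v1 v2 → S.d v1 v2 ≤ r → S.maxedgeLE v1 v2 (r / 8) →
    ∃ q ∈ P, IsSubwalk (S.sp q.1 q.2) (S.sp v1 v2) ∧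
      S.d v1 q.1 ≤ r / 8 ∧ S.d q.2 v2 ≤ r / 8) ∧
  (∀ v : V, {q ∈ P | ∃ x ∈ (S.sp q.1 q.2).support, S.d v x ≤ 4 * r}.ncard ≤ η)

/-- A pair of vertices of `Cm` is *considered* at level `i`. -/
def Considered (S : Setting V) (Cm : Set V) (i : ℤ) (q : V × V) : Prop :=
  q.1 ∈ Cm ∧ q.2 ∈ Cm ∧
    3 / 4 * (8 : ℝ) ^ i ≤ S.d q.1 q.2 ∧ S.d q.1 q.2 ≤ (8 : ℝ) ^ i ∧
    S.maxedgeLE q.1 q.2 ((8 : ℝ) ^ (i - 1))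

/-- `C'` is a valid output of the greedy construction at level `i` from `Cm`. -/
def ValidGreedy (S : Setting V) (Cm : Set V) (i : ℤ) (C' : Set V) : Prop :=
  ∃ (m : ℕ) (q : Fin m → V × V),
    Function.Injective q ∧
    (∀ p : V × V, S.Considered Cm i p ↔ ∃ j : Fin m, q j = p) ∧
    ∃ Sc : Fin (m + 1) → Set V,
      Sc 0 = ∅ ∧ Sc (Fin.last m) = C' ∧
      ∀ j : Fin m,
        ((∃ c ∈ Sc j.castSucc, c ∈ (S.sp (q j).1 (q j).2).support) →
          Sc j.succ = Sc j.castSucc) ∧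
        ((¬ ∃ c ∈ Sc j.castSucc, c ∈ (S.sp (q j).1 (q j).2).support) →
          ∃ c ∈ Cm, c ∈ (S.sp (q j).1 (q j).2).support ∧
            (∀ c' ∈ Cm, c' ∈ (S.sp (q j).1 (q j).2).support →
              |S.d (q j).1 c - S.d (q j).1 (q j).2 / 2| ≤
                |S.d (q j).1 c' - S.d (q j).1 (q j).2 / 2|) ∧
            Sc j.succ = insert c (Sc j.castSucc))

/-- The set of endpoints of edges of weight greater than `t`. -/
def bigEdgeEnds (S : Setting V) (t : ℝ) : Set V :=
  {x : V | ∃ e ∈ S.G.edgeSet, t < S.w e ∧ x ∈ e}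

end Setting


namespace Setting

variable {V : Type} [Fintype V]

lemma wlen_nonneg (S : Setting V) {a b : V} (q : S.G.Walk a b) : 0 ≤ wlen S.w q := by
  apply List.sum_nonneg
  intro x hx
  simp only [List.mem_map] at hx
  obtain ⟨e, he, rfl⟩ := hx
  exact le_trans zero_le_one (S.one_le_w e (q.edges_subset_edgeSet he))

lemma wlen_append (S : Setting V) {a b c : V} (p : S.G.Walk a b) (q : S.G.Walk b c) :
    wlen S.w (p.append q) = wlen S.w p + wlen S.w q := by
  simp [wlen, SimpleGraph.Walk.edges_append]

lemma wlen_cons (S : Setting V) {a b c : V} (e : S.G.Adj a b) (p : S.G.Walk b c) :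
    wlen S.w (SimpleGraph.Walk.cons e p) = S.w s(a, b) + wlen S.w p := by
  simp [wlen, SimpleGraph.Walk.edges_cons]

lemma d_nonneg (S : Setting V) (u v : V) : 0 ≤ S.d u v := S.wlen_nonneg _

lemma d_le_wlen (S : Setting V) {u v : V} (q : S.G.Walk u v) : S.d u v ≤ wlen S.w q :=
  S.sp_shortest u v q

lemma d_self (S : Setting V) (u : V) : S.d u u = 0 :=
  le_antisymm (by simpa [wlen] using S.d_le_wlen (SimpleGraph.Walk.nil : S.G.Walk u u))
    (S.d_nonneg u u)

lemma d_le_of_mem_support (S : Setting V) {a b y : V} (q : S.G.Walk a b)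
    (hy : y ∈ q.support) : S.d a y ≤ wlen S.w q ∧ S.d y b ≤ wlen S.w q := by
  classical
  have hspec := q.take_spec hy
  have hadd := S.wlen_append (q.takeUntil y hy) (q.dropUntil y hy)
  rw [hspec] at hadd
  have h1 : S.d a y ≤ wlen S.w (q.takeUntil y hy) := S.d_le_wlen _
  have h2 : S.d y b ≤ wlen S.w (q.dropUntil y hy) := S.d_le_wlen _
  have n1 := S.wlen_nonneg (q.takeUntil y hy)
  have n2 := S.wlen_nonneg (q.dropUntil y hy)
  constructor <;> linarith

lemma d_le_of_mem_support' (S : Setting V) {a b y : V} (hy : y ∈ (S.sp a b).support) :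
    S.d a y ≤ S.d a b ∧ S.d y b ≤ S.d a b :=
  S.d_le_of_mem_support (S.sp a b) hy

lemma sp_cons_tail (S : Setting V) {z z' u : V} (e : S.G.Adj z z') (q' : S.G.Walk z' u)
    (hq : S.sp z u = SimpleGraph.Walk.cons e q') : q' = S.sp z' u := by
  have hpath : q'.IsPath := by
    have := S.sp_isPath z u
    rw [hq] at this
    exact this.of_cons
  apply S.sp_unique z' u q' hpath
  have h1 : wlen S.w (S.sp z' u) ≤ wlen S.w q' := S.sp_shortest z' u q'
  have h2 : wlen S.w (S.sp z u) ≤ wlen S.w (SimpleGraph.Walk.cons e (S.sp z' u)) :=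
    S.sp_shortest z u _
  rw [hq, S.wlen_cons, S.wlen_cons] at h2
  linarith

/-- Key covering step: if `ρ < d(z,u)` and every vertex of `sp z u` is within `2ρ`
of `v`, then some hub (for center `v`, scale `ρ`) is within `ρ` of `u`. -/
lemma cover (S : Setting V) (v : V) (ρ : ℝ) (hρ : 0 < ρ) (H : Set V)
    (hH : ∀ v1 v2 : V, S.InSvr v ρ v1 v2 → ∃ c ∈ H, c ∈ (S.sp v1 v2).support)
    {z u : V} (q : S.G.Walk z u) (hq : q = S.sp z u)
    (hsupp : ∀ y ∈ q.support, S.d v y ≤ 2 * ρ) (hd : ρ < S.d z u) :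
    ∃ c ∈ H, S.d c u ≤ ρ := by
  induction q with
  | nil =>
    rw [S.d_self] at hd
    linarith
  | @cons z z' u e q' ih =>
    have hq' : q' = S.sp z' u := S.sp_cons_tail e q' hq.symm
    by_cases hle : S.d z' u ≤ ρ
    · have hsvr : S.InSvr v ρ z' u := by
        refine ⟨z, u, Or.inr e, Or.inl rfl, le_of_lt hd,
          ⟨SimpleGraph.Walk.cons e SimpleGraph.Walk.nil, SimpleGraph.Walk.nil, ?_⟩,
          ⟨z, ?_, ?_⟩⟩
        · rw [← hq, ← hq']
          simp [SimpleGraph.Walk.cons_append, SimpleGraph.Walk.nil_append,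
            SimpleGraph.Walk.append_nil]
        · rw [← hq]
          exact SimpleGraph.Walk.start_mem_support _
        · exact hsupp z (SimpleGraph.Walk.start_mem_support _)
      obtain ⟨c, hcH, hcsupp⟩ := hH z' u hsvr
      refine ⟨c, hcH, ?_⟩
      exact le_trans (S.d_le_of_mem_support' hcsupp).2 hle
    · refine ih hq' (fun y hy => hsupp y ?_) (lt_of_not_ge hle)
      rw [SimpleGraph.Walk.support_cons]
      exact List.mem_cons_of_mem _ hy

lemma ncard_biUnion_le {α : Type} [DecidableEq α] (f : α → Set V) (K : ℕ) :
    ∀ F : Finset α, (∀ c ∈ F, (f c).ncard ≤ K) → (⋃ c ∈ F, f c).ncard ≤ F.card * K := by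
  intro F
  induction F using Finset.induction_on with
  | empty => intro _; simp
  | @insert a s ha ih =>
    intro hf
    have h1 : (⋃ c ∈ (insert a s : Finset α), f c) = f a ∪ ⋃ c ∈ s, f c := by
      ext x
      simp [Finset.mem_insert, or_and_right, Set.mem_iUnion]
    rw [h1]
    calc (f a ∪ ⋃ c ∈ s, f c).ncard ≤ (f a).ncard + (⋃ c ∈ s, f c).ncard :=
          Set.ncard_union_le _ _
      _ ≤ K + s.card * K := by
          refine Nat.add_le_add (hf a (Finset.mem_insert_self a s)) (ih ?_)
          exact fun c hc => hf c (Finset.mem_insert_of_mem hc)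
      _ = (insert a s : Finset α).card * K := by
          rw [Finset.card_insert_of_notMem ha]; ring

lemma ncard_setBiUnion_le (f : V → Set V) (K : ℕ) (H : Set V) (h : ℕ)
    (hHcard : H.ncard ≤ h) (hf : ∀ c ∈ H, (f c).ncard ≤ K) :
    (⋃ c ∈ H, f c).ncard ≤ h * K := by
  classical
  have hfin : H.Finite := Set.toFinite H
  have h1 : (⋃ c ∈ H, f c) = ⋃ c ∈ hfin.toFinset, f c := by
    ext x
    simp only [Set.mem_iUnion, Set.Finite.mem_toFinset, exists_prop]
  rw [h1]
  calc (⋃ c ∈ hfin.toFinset, f c).ncard ≤ hfin.toFinset.card * K :=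
        ncard_biUnion_le f K hfin.toFinset (fun c hc => hf c (hfin.mem_toFinset.mp hc))
    _ ≤ h * K := by
        refine Nat.mul_le_mul_right K ?_
        calc hfin.toFinset.card = H.ncard := (Set.ncard_eq_toFinset_card H hfin).symm
          _ ≤ h := hHcard

/-- Iterated doubling: `|B(z, 2^n · 2r) ∩ C| ≤ k (h+1)^n`. -/
lemma ball_bound (S : Setting V) {h k : ℕ} (hhd : S.HighwayDimLE h) {r : ℝ} (hr : 0 < r)
    {C : Set V} (hk : ∀ z : V, (S.ball z (2 * r) ∩ C).ncard ≤ k) :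
    ∀ (n : ℕ) (z : V), (S.ball z (2 ^ n * (2 * r)) ∩ C).ncard ≤ k * (h + 1) ^ n := by
  intro n
  induction n with
  | zero => intro z; simpa using hk z
  | succ n ihn =>
    intro z
    have hρ : (0:ℝ) < 2 ^ n * (2 * r) := by positivity
    obtain ⟨H, hHcard, hHhit⟩ := hhd (2 ^ n * (2 * r)) hρ z
    have hsub : S.ball z (2 ^ (n + 1) * (2 * r)) ∩ C ⊆
        (S.ball z (2 ^ n * (2 * r)) ∩ C) ∪ ⋃ c ∈ H, (S.ball c (2 ^ n * (2 * r)) ∩ C) := by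
      rintro u ⟨hu, huC⟩
      by_cases hle : S.d z u ≤ 2 ^ n * (2 * r)
      · exact Or.inl ⟨hle, huC⟩
      · have hu' : S.d z u ≤ 2 ^ (n + 1) * (2 * r) := hu
        have hd2 : S.d z u ≤ 2 * (2 ^ n * (2 * r)) := by
          have : (2:ℝ) ^ (n + 1) * (2 * r) = 2 * (2 ^ n * (2 * r)) := by ring
          linarith [this ▸ hu']
        obtain ⟨c, hcH, hcu⟩ := S.cover z (2 ^ n * (2 * r)) hρ H hHhit (S.sp z u) rfl
          (fun y hy => le_trans (S.d_le_of_mem_support' hy).1 hd2) (lt_of_not_ge hle)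
        exact Or.inr (Set.mem_biUnion hcH ⟨hcu, huC⟩)
    calc (S.ball z (2 ^ (n + 1) * (2 * r)) ∩ C).ncard
        ≤ ((S.ball z (2 ^ n * (2 * r)) ∩ C) ∪
            ⋃ c ∈ H, (S.ball c (2 ^ n * (2 * r)) ∩ C)).ncard :=
          Set.ncard_le_ncard hsub (Set.toFinite _)
      _ ≤ (S.ball z (2 ^ n * (2 * r)) ∩ C).ncard +
            (⋃ c ∈ H, (S.ball c (2 ^ n * (2 * r)) ∩ C)).ncard := Set.ncard_union_le _ _
      _ ≤ k * (h + 1) ^ n + h * (k * (h + 1) ^ n) := by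
          refine Nat.add_le_add (ihn z) ?_
          exact ncard_setBiUnion_le _ _ H h hHcard (fun c _ => ihn c)
      _ = k * (h + 1) ^ (n + 1) := by ring

end Setting

/-- Bounded complexity of `B(v,r') ∩ C` in the shortcut graph
`G(C,r')`: the number of vertices of `C` in the ball plus the sum of their
degrees in `G(C,r')` is bounded. -/
theorem stmt5 (h k : ℕ) (lam : ℝ) (hlam : 1 ≤ lam) :
    ∃ c : ℕ, ∀ (V : Type) [Fintype V] (S : Setting V), S.HighwayDimLE h →
      ∀ r : ℝ, 0 < r → ∀ C : Set V, S.IsVertexCover r k C →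
        ∀ r' : ℝ, 0 < r' → r' ≤ lam * r →
          ∀ v : V,
            (S.ball v r' ∩ C).ncard +
              ∑ u ∈ (Set.toFinite (S.ball v r' ∩ C)).toFinset,
                {x : V | S.shortcutAdj C r' u x}.ncard ≤ c := by
  classical
  refine ⟨k * (h + 1) ^ ⌈lam⌉₊ +
    (k * (h + 1) ^ ⌈lam⌉₊) * (k + h * (k * (h + 1) ^ ⌈lam⌉₊)), ?_⟩
  intro V _ S hhd r hr C hVC r' hr' hr'lam v
  set J : ℕ := ⌈lam⌉₊ with hJ
  set K : ℕ := k * (h + 1) ^ J with hK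
  have hk : ∀ z : V, (S.ball z (2 * r) ∩ C).ncard ≤ k := hVC.2
  have hball := S.ball_bound hhd hr hk J
  have hlam2 : lam ≤ (2:ℝ) ^ J := by
    calc lam ≤ (⌈lam⌉₊ : ℝ) := Nat.le_ceil lam
      _ ≤ (2:ℝ) ^ J := by
          rw [hJ]
          exact_mod_cast (Nat.lt_two_pow_self (n := ⌈lam⌉₊)).le
  have hr'le : r' ≤ 2 ^ J * (2 * r) := by
    have h1 : lam * r ≤ 2 ^ J * r :=
      mul_le_mul_of_nonneg_right hlam2 hr.le
    have h2 : (2:ℝ) ^ J * r ≤ 2 ^ J * (2 * r) := by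
      have : (0:ℝ) ≤ (2:ℝ) ^ J := by positivity
      nlinarith
    linarith
  -- bound on the number of vertices
  have hM : (S.ball v r' ∩ C).ncard ≤ K := by
    refine le_trans (Set.ncard_le_ncard ?_ (Set.toFinite _)) (hball v)
    exact Set.inter_subset_inter_left C (fun u hu => le_trans hu hr'le)
  -- bound on degrees
  have hdeg : ∀ u : V, {x : V | S.shortcutAdj C r' u x}.ncard ≤ k + h * K := by
    intro u
    obtain ⟨H, hHcard, hHhit⟩ := hhd r hr u
    have hsub : {x : V | S.shortcutAdj C r' u x} ⊆
        (S.ball u (2 * r) ∩ C) ∪ ⋃ c ∈ H, (S.ball c (2 ^ J * (2 * r)) ∩ C) := by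
      rintro x ⟨hne, huC, hxC, hdle, hnoC⟩
      by_cases hle : S.d u x ≤ 2 * r
      · exact Or.inl ⟨hle, hxC⟩
      · have hrle : r ≤ S.d u x := by linarith
        have hsvr : S.InSvr u r u x := by
          refine ⟨u, x, Or.inl rfl, Or.inl rfl, hrle,
            ⟨SimpleGraph.Walk.nil, SimpleGraph.Walk.nil, ?_⟩,
            ⟨u, SimpleGraph.Walk.start_mem_support _, ?_⟩⟩
          · simp
          · rw [S.d_self]; linarith
        obtain ⟨c, hcH, hcsupp⟩ := hHhit u x hsvr
        have hcx : S.d c x ≤ S.d u x := (S.d_le_of_mem_support' hcsupp).2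
        exact Or.inr (Set.mem_biUnion hcH ⟨le_trans hcx (le_trans hdle hr'le), hxC⟩)
    calc {x : V | S.shortcutAdj C r' u x}.ncard
        ≤ ((S.ball u (2 * r) ∩ C) ∪ ⋃ c ∈ H, (S.ball c (2 ^ J * (2 * r)) ∩ C)).ncard :=
          Set.ncard_le_ncard hsub (Set.toFinite _)
      _ ≤ (S.ball u (2 * r) ∩ C).ncard +
            (⋃ c ∈ H, (S.ball c (2 ^ J * (2 * r)) ∩ C)).ncard := Set.ncard_union_le _ _
      _ ≤ k + h * K := by
          refine Nat.add_le_add (hk u) ?_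
          exact Setting.ncard_setBiUnion_le _ _ H h hHcard (fun c _ => hball c)
  -- put it together
  have hsum : ∑ u ∈ (Set.toFinite (S.ball v r' ∩ C)).toFinset,
      {x : V | S.shortcutAdj C r' u x}.ncard ≤ K * (k + h * K) := by
    calc ∑ u ∈ (Set.toFinite (S.ball v r' ∩ C)).toFinset,
          {x : V | S.shortcutAdj C r' u x}.ncard
        ≤ (Set.toFinite (S.ball v r' ∩ C)).toFinset.card * (k + h * K) := by
          have := Finset.sum_le_card_nsmul (Set.toFinite (S.ball v r' ∩ C)).toFinset
            (fun u => {x : V | S.shortcutAdj C r' u x}.ncard) (k + h * K)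
            (fun u _ => hdeg u)
          simpa [smul_eq_mul] using this
      _ ≤ K * (k + h * K) := by
          refine Nat.mul_le_mul_right _ ?_
          rw [← Set.ncard_eq_toFinset_card]
          exact hM
  exact Nat.add_le_add hM hsum
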